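/- arXiv:2602.20613 — 4 statements merged into one kernel-verified Lean document; each statement's English description precedes it below -/
import Mathlib

section
/- Let D be a finite cyclic p-group of order p^n (n ≥ 1) and E a group of automorphisms of D of order e acting freely on D \ {1} (so e divides p - 1). Then the number of conjugacy classes of the semidirect product L = D ⋊ E is e + (p^n - 1)/e. -/
open MulAction SemidirectProduct

section FrobAux

variable {D : Type} [Group D] [IsCyclic D]

private theorem frob_mulaut_comm (f g : MulAut D) : f * g = g * f := by
  obtain ⟨a, ha⟩ := MonoidHom.map_cyclic (f : D →* D)
  obtain ⟨b, hb⟩ := MonoidHom.map_cyclic (g : D →* D)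
  ext d
  simp only [MulAut.mul_apply]
  have ha' : ∀ x : D, f x = x ^ a := ha
  have hb' : ∀ x : D, g x = x ^ b := hb
  simp only [ha', hb', ← zpow_mul]
  rw [mul_comm]

private theorem frob_aut_mul_inv_apply (g f : MulAut D) (a : D) : (g * f) (g⁻¹ a) = f a := by
  rw [frob_mulaut_comm g f]
  simp [MulAut.mul_apply, MulAut.inv_def]

variable (E : Subgroup (MulAut D))

private theorem frob_conj_formula (x y : D ⋊[E.subtype] E) :
    x * y * x⁻¹ = ⟨x.1 * (x.2 : MulAut D) y.1 * ((y.2 : MulAut D) x.1)⁻¹, y.2⟩ := by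
  refine SemidirectProduct.ext ?_ ?_
  · show x.1 * (x.2 : MulAut D) y.1 *
      ((x.2 : MulAut D) * (y.2 : MulAut D)) ((x.2 : MulAut D)⁻¹ x.1⁻¹) = _
    rw [frob_aut_mul_inv_apply, map_inv]
  · show x.2 * y.2 * x.2⁻¹ = y.2
    apply Subtype.ext
    push_cast
    rw [frob_mulaut_comm (x.2 : MulAut D) y.2]
    group

end FrobAux

private theorem frob_chi_surj {D : Type} [CommGroup D] [Finite D] (f : MulAut D)
    (hf : ∀ d : D, d ≠ 1 → f d ≠ d) (a : D) :
    Function.Surjective (fun w : D => w * a * (f w)⁻¹) := by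
  apply Finite.surjective_of_injective
  intro x y hxy
  simp only at hxy
  have h1 : x * a * (f x)⁻¹ = y * a * (f y)⁻¹ := hxy
  rw [mul_right_comm x a, mul_right_comm y a] at h1
  have h2 : x * (f x)⁻¹ = y * (f y)⁻¹ := mul_right_cancel h1
  rw [← div_eq_mul_inv, ← div_eq_mul_inv, div_eq_div_iff_mul_eq_mul] at h2
  -- h2 : x * f y = y * f x
  have h3 : y⁻¹ * x = f (y⁻¹ * x) := by
    rw [map_mul, map_inv]
    apply mul_left_cancel (a := y * f y)
    calc (y * f y) * (y⁻¹ * x) = x * f y := by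
          simp [mul_comm, mul_assoc, mul_left_comm]
      _ = y * f x := h2
      _ = (y * f y) * ((f y)⁻¹ * f x) := by
          simp [mul_comm, mul_assoc, mul_left_comm]
  by_contra hne
  have hu : y⁻¹ * x ≠ 1 := fun h => hne (by rwa [inv_mul_eq_one, eq_comm] at h)
  exact hf _ hu h3.symm

private noncomputable def frobPhi {D : Type} [Group D] (E : Subgroup (MulAut D)) :
    (D ⋊[E.subtype] E) → ({f : E // f ≠ 1} ⊕ MulAction.orbitRel.Quotient E D) := fun x =>
  letI := Classical.dec (x.right = 1)
  if h : x.right = 1 then Sum.inr (Quotient.mk'' x.left) else Sum.inl ⟨x.right, h⟩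

private theorem frobPhi_conj {D : Type} [Group D] [IsCyclic D] (E : Subgroup (MulAut D))
    (hcomm : ∀ a b : D, a * b = b * a) (c x : D ⋊[E.subtype] E) :
    frobPhi E (c * x * c⁻¹) = frobPhi E x := by
  rw [frob_conj_formula]
  unfold frobPhi
  by_cases h : x.right = 1
  · simp only [h, dif_pos, OneMemClass.coe_one, MulAut.one_apply]
    have : c.1 * (c.2 : MulAut D) x.1 * c.1⁻¹ = (c.2 : MulAut D) x.1 := by
      rw [hcomm c.1 ((c.2 : MulAut D) x.1), mul_inv_cancel_right]
    rw [this]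
    exact congrArg Sum.inr (Quotient.sound' (MulAction.mem_orbit x.1 c.2))
  · rw [dif_neg h, dif_neg h]

private theorem frob_card_classes {D : Type} [Group D] [Finite D] [IsCyclic D]
    (E : Subgroup (MulAut D))
    (hcomm : ∀ a b : D, a * b = b * a)
    (hfree : ∀ f ∈ E, f ≠ 1 → ∀ d : D, d ≠ 1 → f d ≠ d) :
    Nat.card (ConjClasses (D ⋊[E.subtype] E)) =
      Nat.card ({f : E // f ≠ 1} ⊕ MulAction.orbitRel.Quotient E D) := by
  have hwd : ∀ a b : D ⋊[E.subtype] E, IsConj a b → frobPhi E a = frobPhi E b := by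
    intro a b hab
    obtain ⟨c, hc⟩ := isConj_iff.mp hab
    rw [← hc]
    exact (frobPhi_conj E hcomm c a).symm
  refine Nat.card_eq_of_bijective (Quotient.lift (frobPhi E) hwd) ⟨?_, ?_⟩
  · intro q1 q2
    refine Quotient.inductionOn₂' q1 q2 ?_
    intro a b h
    replace h : frobPhi E a = frobPhi E b := h
    unfold frobPhi at h
    apply Quotient.sound'
    by_cases ha : a.right = 1 <;> by_cases hb : b.right = 1
    · rw [dif_pos ha, dif_pos hb] at h
      replace h : Quotient.mk'' a.left = Quotient.mk'' b.left := Sum.inr.inj h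
      obtain ⟨g, hg⟩ : ∃ g : E, g • b.left = a.left := Quotient.exact' h
      refine (isConj_iff.mpr ⟨⟨1, g⟩, ?_⟩).symm
      rw [frob_conj_formula]
      refine SemidirectProduct.ext ?_ ?_
      · show 1 * (g : MulAut D) b.left * ((b.right : MulAut D) 1)⁻¹ = a.left
        rw [map_one, inv_one, mul_one, one_mul]
        exact hg
      · show b.right = a.right
        rw [ha, hb]
    · rw [dif_pos ha, dif_neg hb] at h; exact absurd h (by simp)
    · rw [dif_neg ha, dif_pos hb] at h; exact absurd h (by simp)
    · rw [dif_neg ha, dif_neg hb] at h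
      replace h : a.right = b.right := congrArg Subtype.val (Sum.inl.inj h)
      have hcoe : (a.right : MulAut D) ≠ 1 := fun hh => ha (Subtype.ext hh)
      have hsurj : ∃ w : D, w * a.left * ((a.right : MulAut D) w)⁻¹ = b.left := by
        letI : CommGroup D := IsCyclic.commGroup
        exact frob_chi_surj (a.right : MulAut D)
          (fun d hd => hfree _ a.right.2 hcoe d hd) a.left b.left
      obtain ⟨w, hw⟩ := hsurj
      refine isConj_iff.mpr ⟨⟨w, 1⟩, ?_⟩
      rw [frob_conj_formula]
      refine SemidirectProduct.ext ?_ ?_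
      · show w * ((1 : E) : MulAut D) a.left * ((a.right : MulAut D) w)⁻¹ = b.left
        rw [OneMemClass.coe_one, MulAut.one_apply]
        exact hw
      · exact h
  · rintro (⟨f, hf⟩ | ω)
    · refine ⟨Quotient.mk'' ⟨1, f⟩, ?_⟩
      show frobPhi E ⟨1, f⟩ = _
      unfold frobPhi
      rw [dif_neg hf]
    · refine Quotient.inductionOn' ω ?_
      intro d
      refine ⟨Quotient.mk'' ⟨d, 1⟩, ?_⟩
      show frobPhi E ⟨d, 1⟩ = _
      unfold frobPhi
      rw [dif_pos rfl]

/-- Let `D` be a cyclic `p`-group of order `p ^ n` (`n ≥ 1`) and `E` a group of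
automorphisms of `D` of order `e` acting freely on `D \ {1}`.  Then the number of
conjugacy classes of the semidirect product `L = D ⋊ E` is `e + (p ^ n - 1) / e`. -/
theorem card_conjClasses_frobenius_cyclic (p n e : ℕ) (hp : p.Prime) (hn : 1 ≤ n)
    {D : Type} [Group D] [Finite D] [IsCyclic D] (hD : Nat.card D = p ^ n)
    (E : Subgroup (MulAut D)) (he : Nat.card E = e)
    (hfree : ∀ f ∈ E, f ≠ 1 → ∀ d : D, d ≠ 1 → f d ≠ d) :
    Nat.card (ConjClasses (D ⋊[E.subtype] E)) = e + (p ^ n - 1) / e := by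
  classical
  have hcomm : ∀ a b : D, a * b = b * a := fun a b => by
    letI := IsCyclic.commGroup (α := D); exact mul_comm a b
  have he1 : 1 ≤ e := he ▸ Nat.card_pos
  set Ω := MulAction.orbitRel.Quotient E D with hΩdef
  haveI : Fintype D := Fintype.ofFinite D
  haveI : Finite Ω := Quotient.finite _
  haveI : Fintype Ω := Fintype.ofFinite Ω
  haveI : Fintype E := Fintype.ofFinite E
  set ω₀ : Ω := Quotient.mk'' (1 : D) with hω₀
  haveI : Nonempty Ω := ⟨ω₀⟩
  -- count the subtype of nontrivial elements of E
  have hc1 : Nat.card {f : E // f ≠ 1} = e - 1 := by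
    rw [Nat.card_eq_fintype_card, Fintype.card_subtype_compl (fun f : E => f = 1),
      Fintype.card_subtype_eq, ← he, Nat.card_eq_fintype_card]
  -- orbits of nontrivial elements have size e
  have horb : ∀ d : D, d ≠ 1 → Nat.card (MulAction.orbit E d) = e := by
    intro d hd
    have hstab : MulAction.stabilizer E d = ⊥ := by
      ext g
      simp only [MulAction.mem_stabilizer_iff, Subgroup.mem_bot]
      constructor
      · intro hg
        by_contra hne
        exact hfree g g.2 (fun h1 => hne (Subtype.ext h1)) d hd hg
      · rintro rfl; exact one_smul _ _
    calc Nat.card (MulAction.orbit E d)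
        = Nat.card (E ⧸ MulAction.stabilizer E d) :=
          Nat.card_congr (MulAction.orbitEquivQuotientStabilizer E d)
      _ = (MulAction.stabilizer E d).index := rfl
      _ = e := by rw [hstab, Subgroup.index_bot, he]
  -- orbit of 1 is a singleton
  have horb0 : MulAction.orbit E (1 : D) = {(1 : D)} := by
    ext x
    simp only [Set.mem_singleton_iff]
    constructor
    · rintro ⟨g, rfl⟩
      show (g : MulAut D) 1 = 1
      exact map_one _
    · rintro rfl
      exact MulAction.mem_orbit_self 1
  have h3 : Nat.card (MulAction.orbitRel.Quotient.orbit ω₀) = 1 := by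
    rw [hω₀, MulAction.orbitRel.Quotient.orbit_mk, horb0]
    simp
  have hω : ∀ ω : Ω, ω ≠ ω₀ → Nat.card (MulAction.orbitRel.Quotient.orbit ω) = e := by
    intro ω hne
    have hout : MulAction.orbitRel.Quotient.orbit ω = MulAction.orbit E (Quotient.out ω) :=
      MulAction.orbitRel.Quotient.orbit_eq_orbit_out ω Quotient.out_eq'
    have hd : Quotient.out ω ≠ 1 := by
      intro h0
      apply hne
      rw [← Quotient.out_eq' ω, h0]
    rw [hout]
    exact horb _ hd
  -- the class number computation
  have hsum : Nat.card D = ∑ ω : Ω, Nat.card (MulAction.orbitRel.Quotient.orbit ω) := by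
    calc Nat.card D = Nat.card (Σ ω : Ω, MulAction.orbitRel.Quotient.orbit ω) :=
          Nat.card_congr (MulAction.selfEquivSigmaOrbits' E D)
      _ = ∑ ω : Ω, Nat.card (MulAction.orbitRel.Quotient.orbit ω) := by
          rw [Nat.card_eq_fintype_card, Fintype.card_sigma]
          exact Finset.sum_congr rfl fun ω _ => (Nat.card_eq_fintype_card).symm
  have hsum2 : Nat.card D = 1 + (Fintype.card Ω - 1) * e := by
    rw [hsum, ← Finset.add_sum_erase Finset.univ _ (Finset.mem_univ ω₀), h3,
      Finset.sum_congr rfl (fun ω hω' => hω ω (Finset.ne_of_mem_erase hω')),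
      Finset.sum_const, smul_eq_mul, Finset.card_erase_of_mem (Finset.mem_univ _),
      Finset.card_univ]
  rw [hD] at hsum2
  have hΩpos : 1 ≤ Fintype.card Ω := Fintype.card_pos
  have hdiv : (p ^ n - 1) / e = Fintype.card Ω - 1 := by
    have h4 : p ^ n - 1 = (Fintype.card Ω - 1) * e := by omega
    rw [h4, Nat.mul_div_cancel _ (by omega : 0 < e)]
  rw [frob_card_classes E hcomm hfree, Nat.card_sum, hc1, hdiv,
    (Nat.card_eq_fintype_card (α := Ω))]
  omega
end

section
/- Let D be a finite abelian group and E a finite group acting on D such that the action on D \ {1} is free. Then for every nontrivial subgroup Q of D, the centralizer of Q in the semidirect product L = D ⋊ E equals D, i.e., C_L(Q) = D. -/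
/-- Let `D` be a finite abelian group and `E` a finite group acting on `D` such that
the action on `D \ {1}` is free.  Then for every nontrivial subgroup `Q` of `D`, the
centralizer of (the image of) `Q` in `L = D ⋊ E` equals (the image of) `D`. -/
theorem centralizer_eq_kernel_of_free_action {D E : Type} [CommGroup D] [Finite D]
    [Group E] [Finite E] (φ : E →* MulAut D)
    (hfree : ∀ f : E, f ≠ 1 → ∀ d : D, d ≠ 1 → φ f d ≠ d)
    (Q : Subgroup D) (hQ : Q ≠ ⊥) :
    Subgroup.centralizer
        ((Q.map (SemidirectProduct.inl : D →* D ⋊[φ] E) : Subgroup (D ⋊[φ] E)) : Set (D ⋊[φ] E)) =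
      (SemidirectProduct.inl : D →* D ⋊[φ] E).range := by
  obtain ⟨q, hqQ, hq1⟩ : ∃ q ∈ Q, q ≠ (1 : D) := by
    by_contra h
    push_neg at h
    exact hQ (le_antisymm (fun x hx => h x hx) bot_le)
  ext x
  rw [Subgroup.mem_centralizer_iff]
  constructor
  · intro hx
    have hc := hx (SemidirectProduct.inl q) ⟨q, hqQ, rfl⟩
    have hleft := congrArg SemidirectProduct.left hc
    simp [SemidirectProduct.mul_left] at hleft
    -- hleft : q * x.left = x.left * φ x.right q (roughly)
    have hfix : φ x.right q = q := by
      have : q * x.left = x.left * φ x.right q := by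
        simpa using hleft
      have := this.symm
      rw [mul_comm] at this
      exact mul_right_cancel this
    have hr : x.right = 1 := by
      by_contra hr
      exact hfree x.right hr q hq1 hfix
    exact ⟨x.left, by ext <;> simp [hr]⟩
  · rintro ⟨d, rfl⟩ g ⟨p, hpQ, rfl⟩
    have : p * d = d * p := mul_comm p d
    simp [← map_mul, this]
end

section
/- Let P be a finite p-group and E a p'-group of automorphisms of P, with P abelian. Then P = [P, E] × C_P(E), where [P,E] is the subgroup generated by elements x⁻¹·e(x) for x ∈ P, e ∈ E, and C_P(E) is the subgroup of elements fixed by all of E. -/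
/-- The subgroup of points of `P` fixed by every automorphism in `E`. -/
def fixedSubgroup {P : Type} [Group P] (E : Subgroup (MulAut P)) : Subgroup P where
  carrier := {x | ∀ f ∈ E, f x = x}
  one_mem' := by intro f _; exact map_one f
  mul_mem' := by
    intro a b ha hb f hf
    rw [map_mul, ha f hf, hb f hf]
  inv_mem' := by
    intro a ha f hf
    rw [map_inv, ha f hf]

/-- The subgroup `[P, E]` generated by the elements `x⁻¹ · f(x)` for `x ∈ P`, `f ∈ E`. -/
def commutatorSubgroupWith {P : Type} [Group P] (E : Subgroup (MulAut P)) : Subgroup P :=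
  Subgroup.closure {y | ∃ x : P, ∃ f ∈ E, y = x⁻¹ * f x}

/-- Let `P` be a finite abelian `p`-group and `E` a `p'`-group of automorphisms of `P`.
Then `P = [P, E] × C_P(E)` (an internal direct product). -/
theorem coprime_action_internal_direct_product (p : ℕ) (hp : p.Prime)
    {P : Type} [CommGroup P] [Finite P] (hP : IsPGroup p P)
    (E : Subgroup (MulAut P)) (hE : (Nat.card E).Coprime p) :
    commutatorSubgroupWith E ⊔ fixedSubgroup E = ⊤ ∧
      commutatorSubgroupWith E ⊓ fixedSubgroup E = ⊥ := by
  haveI : Fintype P := Fintype.ofFinite P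
  haveI : Fintype E := Fintype.ofFinite E
  set n := Nat.card E with hn
  -- the "averaging" homomorphism T x = ∏ f ∈ E, f x
  let T : P →* P := ∏ f : E, MulEquiv.toMonoidHom (f : MulAut P)
  have hT : ∀ x : P, T x = ∏ f : E, (f : MulAut P) x := by
    intro x
    simp [T]
  -- T (f x) = T x for f ∈ E
  have h1 : ∀ (f : E) (x : P), T ((f : MulAut P) x) = T x := by
    intro f x
    rw [hT, hT]
    exact Fintype.prod_equiv (Equiv.mulRight f)
      (fun g => (g : MulAut P) ((f : MulAut P) x)) (fun g => (g : MulAut P) x)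
      (fun g => rfl)
  -- T x is always a fixed point
  have hTfix : ∀ x : P, T x ∈ fixedSubgroup E := by
    intro x f hf
    rw [hT, map_prod]
    exact Fintype.prod_equiv (Equiv.mulLeft (⟨f, hf⟩ : E))
      (fun g => f ((g : MulAut P) x)) (fun g => (g : MulAut P) x)
      (fun g => rfl)
  -- on fixed points T is the n-th power map
  have hTfixed : ∀ x ∈ fixedSubgroup E, T x = x ^ n := by
    intro x hx
    rw [hT]
    rw [show (∏ g : E, (g : MulAut P) x) = ∏ _g : E, x from
      Finset.prod_congr rfl (fun g _ => hx g.1 g.2)]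
    rw [Finset.prod_const, Finset.card_univ, hn, Nat.card_eq_fintype_card]
  -- T vanishes on [P, E]
  have hTcomm : ∀ x ∈ commutatorSubgroupWith E, T x = 1 := by
    have : commutatorSubgroupWith E ≤ T.ker := by
      rw [commutatorSubgroupWith, Subgroup.closure_le]
      rintro y ⟨x, f, hf, rfl⟩
      have := h1 ⟨f, hf⟩ x
      show T (x⁻¹ * f x) = 1
      rw [map_mul, map_inv, this, inv_mul_cancel]
    exact fun x hx => this hx
  -- y ^ n * (T y)⁻¹ ∈ [P, E]
  have hcm : ∀ y : P, y ^ n * (T y)⁻¹ ∈ commutatorSubgroupWith E := by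
    intro y
    have key : y ^ n * (T y)⁻¹ = ∏ g : E, (y⁻¹ * (g : MulAut P) y)⁻¹ := by
      rw [hT]
      simp only [mul_inv_rev, inv_inv, Finset.prod_mul_distrib,
        Finset.prod_inv_distrib, Finset.prod_const, Finset.card_univ]
      rw [hn, Nat.card_eq_fintype_card, mul_comm]
    rw [key]
    exact prod_mem (fun g _ => inv_mem (Subgroup.subset_closure
      ⟨y, (g : MulAut P), g.2, rfl⟩))
  -- coprimality of n with |P|
  haveI : Fact p.Prime := ⟨hp⟩
  obtain ⟨k, hk⟩ := IsPGroup.iff_card.mp hP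
  have hcop : (Nat.card P).Coprime n := by
    rw [hk]
    exact (Nat.Coprime.pow_left k (Nat.coprime_comm.mp hE))
  constructor
  · -- ⊔ = ⊤
    rw [eq_top_iff]
    intro x _
    set y := (powCoprime hcop).symm x with hy
    have hyx : y ^ n = x := by
      have := (powCoprime hcop).apply_symm_apply x
      rwa [powCoprime_apply] at this
    have hxe : y ^ n * (T y)⁻¹ * T y = x := by
      rw [inv_mul_cancel_right, hyx]
    exact hxe ▸ mul_mem
      (Subgroup.mem_sup_left (hcm y))
      (Subgroup.mem_sup_right (hTfix y))
  · -- ⊓ = ⊥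
    rw [eq_bot_iff]
    rintro x ⟨hxc, hxf⟩
    have h2 : x ^ n = 1 := by
      rw [← hTfixed x hxf]
      exact hTcomm x hxc
    have hd1 : orderOf x ∣ n := orderOf_dvd_of_pow_eq_one h2
    have hd2 : orderOf x ∣ Nat.card P := orderOf_dvd_natCard x
    have : orderOf x = 1 := Nat.eq_one_of_dvd_coprimes hcop hd2 hd1
    rw [Subgroup.mem_bot]
    exact orderOf_eq_one_iff.mp this
end

section
/- Let P be a finite abelian p-group, D a subgroup of P, and E a p'-group of automorphisms of P stabilizing D with [P,E] ≤ D and C_D(E) = 1. Then D = [P,E] and P = D × C_P(E). -/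
/-- Let `P` be a finite abelian `p`-group, `D ≤ P`, and `E` a `p'`-group of automorphisms
of `P` stabilizing `D`, with `[P, E] ≤ D` and `C_D(E) = 1`.  Then `D = [P, E]` and
`P = D × C_P(E)` (an internal direct product). -/
theorem hyperfocal_direct_product (p : ℕ) (hp : p.Prime)
    {P : Type} [CommGroup P] [Finite P] (hP : IsPGroup p P)
    (E : Subgroup (MulAut P)) (hE : (Nat.card E).Coprime p)
    (D : Subgroup P) (hstab : ∀ f ∈ E, ∀ x ∈ D, f x ∈ D)
    (hcomm : commutatorSubgroupWith E ≤ D)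
    (hfix : ∀ x ∈ D, (∀ f ∈ E, f x = x) → x = 1) :
    D = commutatorSubgroupWith E ∧ D ⊔ fixedSubgroup E = ⊤ ∧ D ⊓ fixedSubgroup E = ⊥ := by
  haveI : Fact p.Prime := ⟨hp⟩
  haveI : Fintype E := Fintype.ofFinite E
  set n := Nat.card E with hn
  -- coprimality with |P|
  obtain ⟨k, hk⟩ := hP.exists_card_eq
  have hco : (Nat.card P).Coprime n := by
    rw [hk]
    exact Nat.Coprime.pow_left k hE.symm
  -- transfer map
  set T : P → P := fun y => ∏ f : E, (f : MulAut P) y with hT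
  have hTfix : ∀ y : P, T y ∈ fixedSubgroup E := by
    intro y g hg
    show g (∏ f : E, (f : MulAut P) y) = _
    rw [map_prod]
    exact Fintype.prod_equiv (Equiv.mulLeft (⟨g, hg⟩ : E)) _ _ (fun f => rfl)
  have hKmem : ∀ y : P, (∏ f : E, (y⁻¹ * (f : MulAut P) y)) ∈ commutatorSubgroupWith E := by
    intro y
    refine Subgroup.prod_mem _ (fun f _ => Subgroup.subset_closure ?_)
    exact ⟨y, f, f.2, rfl⟩
  have key : ∀ y : P, y ^ n = T y * (∏ f : E, (y⁻¹ * (f : MulAut P) y))⁻¹ := by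
    intro y
    have : T y = y ^ n * ∏ f : E, (y⁻¹ * (f : MulAut P) y) := by
      rw [hT]
      simp only [Finset.prod_mul_distrib, Finset.prod_const, mul_inv_cancel_left,
        ← Finset.prod_mul_distrib]
      rw [Finset.prod_congr rfl (fun f _ => (mul_inv_cancel_left y _).symm)]
      rw [Finset.prod_mul_distrib, Finset.prod_const, Finset.card_univ]
      congr 1
      rw [hn, Nat.card_eq_fintype_card]
    rw [this, mul_assoc, mul_inv_cancel, mul_one]
  -- surjectivity of n-th power
  have hsurj : ∀ x : P, ∃ y : P, y ^ n = x := fun x => ⟨(powCoprime hco).symm x, (powCoprime hco).apply_symm_apply x⟩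
  have hsup : commutatorSubgroupWith E ⊔ fixedSubgroup E = ⊤ := by
    rw [eq_top_iff]
    intro x _
    obtain ⟨y, hy⟩ := hsurj x
    rw [← hy, key y]
    exact mul_mem (Subgroup.mem_sup_right (hTfix y))
      (Subgroup.mem_sup_left (inv_mem (hKmem y)))
  have hDK : D = commutatorSubgroupWith E := by
    refine le_antisymm ?_ hcomm
    intro d hd
    obtain ⟨y, hy⟩ := hsurj d
    have hTy : T y ∈ D := by
      have : T y = d * ∏ f : E, (y⁻¹ * (f : MulAut P) y) := by
        rw [← hy, key y, mul_assoc, inv_mul_cancel, mul_one]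
      rw [this]
      exact mul_mem hd (hcomm (hKmem y))
    have : T y = 1 := hfix _ hTy (hTfix y)
    rw [← hy, key y, this, one_mul]
    exact inv_mem (hKmem y)
  refine ⟨hDK, ?_, ?_⟩
  · rw [eq_top_iff, ← hsup]
    exact sup_le_sup_right hcomm _
  · rw [eq_bot_iff]
    intro x hx
    exact hfix x hx.1 hx.2
end
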